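/- arXiv:1008.1186 — 2 statements merged into one kernel-verified Lean document; each statement's English description precedes it below -/
import Mathlib

section
/- Let ABC be a non-degenerate triangle in the Euclidean plane and let P be a point not lying on any of the lines BC, CA, AB. Let L be the intersection of line AP with line BC, M the intersection of line BP with line CA, and N the intersection of line CP with line AB (the feet of the Cevians through P), and assume these intersections exist and are not vertices of the triangle. Let Q be the Miquel point, i.e. a common point of the circles AMN, BNL, CLM. Let U be the second intersection of line AP with circle AMN, V the second intersection of line BP with circle BNL, and W the second intersection of line CP with circle CLM. Then the five points U, V, W, P, Q are concyclic. -/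
open EuclideanGeometry

local notation "Pt" => EuclideanSpace ℝ (Fin 2)

/-!
Write `∠` for directed angles modulo `π`. On the circle `AMN`, the inscribed angle theorem (in its
tangent-chord form when the line `AP` touches the circle, i.e. when `U = A`) gives
`∠(UQ, UP) = ∠(UQ, UA) = ∠(FQ, FA)` for every other point `F` of the circle. Pivoting at a common
point of two Miquel circles lying on a side of the triangle shows that this Miquel angle is the same
for all three circles; as `L`, `M`, `N` are distinct, at most one of them is `Q`, so any two circles
are linked either directly or through the third. Hence `U`, `V`, `W` all see `QP` under the same
nonzero directed angle and lie on one circle with `P` and `Q`.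
-/

open RealInnerProductSpace Module Real

namespace EuclideanGeometry

theorem eq_of_mem_affineSpan_pair_of_mem_affineSpan_pair {k V P : Type*} [DivisionRing k]
    [AddCommGroup V] [Module k V] [AddTorsor V P] {a b c p : P}
    (h : ¬Collinear k ({a, b, c} : Set P)) (hb : p ∈ line[k, a, b]) (hc : p ∈ line[k, a, c]) :
    p = a := by
  by_contra hpa
  have hline : line[k, a, b] = line[k, a, c] := by
    rw [← affineSpan_pair_eq_of_right_mem_of_ne hb hpa,
      affineSpan_pair_eq_of_right_mem_of_ne hc hpa]
  refine h (collinear_triple_of_mem_affineSpan_pair (left_mem_affineSpan_pair k a b)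
    (right_mem_affineSpan_pair k a b) ?_)
  exact hline ▸ right_mem_affineSpan_pair k a c

variable {V P : Type*} [NormedAddCommGroup V] [InnerProductSpace ℝ V] [MetricSpace P]
  [NormedAddTorsor V P]

theorem Sphere.not_collinear_of_mem {s : Sphere P} {a b c : P} (ha : a ∈ s) (hb : b ∈ s)
    (hc : c ∈ s) (hab : a ≠ b) (hac : a ≠ c) (hbc : b ≠ c) :
    ¬Collinear ℝ ({a, b, c} : Set P) := by
  have hs : Cospherical ({a, b, c} : Set P) :=
    cospherical_iff_exists_sphere.2 ⟨s, by simp [Set.insert_subset_iff, ha, hb, hc]⟩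
  exact affineIndependent_iff_not_collinear_set.1 (hs.affineIndependent_of_ne hab hac hbc)

variable [Fact (finrank ℝ V = 2)] [Module.Oriented ℝ V (Fin 2)]

theorem Sphere.two_zsmul_oangle_eq_of_inner_eq_zero {s : Sphere P} {p₁ p₂ p₃ q : P}
    (hp₁ : p₁ ∈ s) (hp₂ : p₂ ∈ s) (hp₃ : p₃ ∈ s) (hq : ⟪q -ᵥ p₃, p₃ -ᵥ s.center⟫ = 0)
    (hp₂p₁ : p₂ ≠ p₁) (hp₂p₃ : p₂ ≠ p₃) (hp₃p₁ : p₃ ≠ p₁) (hqp₃ : q ≠ p₃) :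
    (2 : ℤ) • ∡ p₁ p₃ q = (2 : ℤ) • ∡ p₁ p₂ p₃ := by
  have hc : s.center ≠ p₃ := by
    rintro hc
    have := dist_center_eq_dist_center_of_mem_sphere hp₂ hp₃
    rw [hc, dist_self, dist_eq_zero] at this
    exact hp₂p₃ this
  have hright : (2 : ℤ) • ∡ s.center p₃ q = π := by
    have hinner : ⟪s.center -ᵥ p₃, q -ᵥ p₃⟫ = 0 := by
      rw [real_inner_comm, ← neg_vsub_eq_vsub_rev p₃ s.center, inner_neg_right, hq, neg_zero]
    rw [Real.Angle.two_zsmul_eq_pi_iff]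
    rcases (Module.Oriented.positiveOrientation (M := V)).eq_zero_or_oangle_eq_iff_inner_eq_zero.2
      hinner with h | h | h
    · exact absurd h (vsub_ne_zero.2 hc)
    · exact absurd h (vsub_ne_zero.2 hqp₃)
    · exact h
  have hsum := Sphere.two_zsmul_oangle_center_add_two_zsmul_oangle_eq_pi hp₃ hp₂ hp₁ hp₂p₃
    hp₂p₁ hp₃p₁
  calc (2 : ℤ) • ∡ p₁ p₃ q = (2 : ℤ) • ∡ p₁ p₃ s.center + (2 : ℤ) • ∡ s.center p₃ q := by
        rw [← smul_add, oangle_add hp₃p₁.symm hc hqp₃]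
    _ = -((2 : ℤ) • ∡ p₃ p₂ p₁) := by
        rw [hright, eq_sub_of_add_eq hsum, sub_add_eq_add_sub, Real.Angle.coe_pi_add_coe_pi,
          zero_sub]
    _ = (2 : ℤ) • ∡ p₁ p₂ p₃ := by rw [oangle_rev p₁, smul_neg, neg_neg]

theorem Sphere.two_zsmul_oangle_of_second_intersection {s : Sphere P} {a p q u f : P}
    (ha : a ∈ s) (hf : f ∈ s) (hq : q ∈ s) (hu : u ∈ s) (hu_line : u ∈ line[ℝ, a, p])
    (h : ∀ x ∈ line[ℝ, a, p], x ∈ s → x = a ∨ x = u) (hpa : p ≠ a) (hfa : f ≠ a)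
    (hfq : f ≠ q) :
    u = q ∨ u = p ∨ (2 : ℤ) • ∡ q u p = (2 : ℤ) • ∡ q f a := by
  by_cases huq : u = q
  · exact Or.inl huq
  by_cases hup : u = p
  · exact Or.inr (Or.inl hup)
  refine Or.inr (Or.inr ?_)
  by_cases hua : u = a
  · subst hua
    -- the line `up` meets `s` only at `u`, so it is tangent there
    have htangent : s.secondInter u (p -ᵥ u) = u := by
      simpa using h _ (s.secondInter_vsub_mem_affineSpan u p) ((Sphere.secondInter_mem _).2 hu)
    exact Sphere.two_zsmul_oangle_eq_of_inner_eq_zero hq hf hu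
      (Sphere.secondInter_eq_self_iff.1 htangent) hfq hfa huq hpa
  · calc (2 : ℤ) • ∡ q u p = (2 : ℤ) • ∡ q u a := by
          refine Collinear.two_zsmul_oangle_eq_right ?_ (Ne.symm hup) (Ne.symm hua)
          exact (collinear_insert_of_mem_affineSpan_pair hu_line).subset
            (by simp [Set.insert_subset_iff])
      _ = (2 : ℤ) • ∡ q f a := Sphere.two_zsmul_oangle_eq hq hu hf ha huq hua hfq hfa

theorem two_zsmul_oangle_eq_of_mem_inter_of_collinear {s s' : Sphere P} {p p' x q f f' : P}
    (hx : x ∈ s) (hx' : x ∈ s') (hq : q ∈ s) (hq' : q ∈ s') (hp : p ∈ s) (hp' : p' ∈ s')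
    (hf : f ∈ s) (hf' : f' ∈ s') (hcol : Collinear ℝ ({p, x, p'} : Set P))
    (hxp : x ≠ p) (hxp' : x ≠ p') (hxq : x ≠ q)
    (hfp : f ≠ p) (hfq : f ≠ q) (hf'p' : f' ≠ p') (hf'q : f' ≠ q) :
    (2 : ℤ) • ∡ q f p = (2 : ℤ) • ∡ q f' p' :=
  calc (2 : ℤ) • ∡ q f p = (2 : ℤ) • ∡ q x p := Sphere.two_zsmul_oangle_eq hq hf hx hp hfq hfp hxq hxp
    _ = (2 : ℤ) • ∡ q x p' := hcol.two_zsmul_oangle_eq_right hxp.symm hxp'.symm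
    _ = (2 : ℤ) • ∡ q f' p' :=
      Sphere.two_zsmul_oangle_eq hq' hx' hf' hp' hxq hxp' hf'q hf'p'

theorem two_zsmul_oangle_eq_of_miquel {s₁ s₂ s₃ : Sphere P} {p₁ p₂ p₃ l m n q f₁ f₂ : P}
    (hp₁ : p₁ ∈ s₁) (hp₂ : p₂ ∈ s₂) (hp₃ : p₃ ∈ s₃)
    (hn₁ : n ∈ s₁) (hn₂ : n ∈ s₂) (hm₁ : m ∈ s₁) (hm₃ : m ∈ s₃) (hl₂ : l ∈ s₂) (hl₃ : l ∈ s₃)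
    (hq₁ : q ∈ s₁) (hq₂ : q ∈ s₂) (hq₃ : q ∈ s₃)
    (hn : Collinear ℝ ({p₁, n, p₂} : Set P)) (hm : Collinear ℝ ({p₁, m, p₃} : Set P))
    (hl : Collinear ℝ ({p₃, l, p₂} : Set P))
    (hnp₁ : n ≠ p₁) (hnp₂ : n ≠ p₂) (hmp₁ : m ≠ p₁) (hmp₃ : m ≠ p₃) (hlp₂ : l ≠ p₂)
    (hlp₃ : l ≠ p₃) (hmn : m ≠ n) (hln : l ≠ n)
    (hf₁ : f₁ ∈ s₁) (hf₁p₁ : f₁ ≠ p₁) (hf₁q : f₁ ≠ q)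
    (hf₂ : f₂ ∈ s₂) (hf₂p₂ : f₂ ≠ p₂) (hf₂q : f₂ ≠ q) :
    (2 : ℤ) • ∡ q f₁ p₁ = (2 : ℤ) • ∡ q f₂ p₂ := by
  by_cases hnq : n = q
  · -- `n = q` cannot serve as a pivot, so go around through `s₃`
    subst hnq
    calc (2 : ℤ) • ∡ n f₁ p₁ = (2 : ℤ) • ∡ n l p₃ :=
          two_zsmul_oangle_eq_of_mem_inter_of_collinear hm₁ hm₃ hq₁ hq₃ hp₁ hp₃ hf₁ hl₃ hm
            hmp₁ hmp₃ hmn hf₁p₁ hf₁q hlp₃ hln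
      _ = (2 : ℤ) • ∡ n f₂ p₂ :=
          two_zsmul_oangle_eq_of_mem_inter_of_collinear hl₃ hl₂ hq₃ hq₂ hp₃ hp₂ hl₃ hf₂ hl
            hlp₃ hlp₂ hln hlp₃ hln hf₂p₂ hf₂q
  · exact two_zsmul_oangle_eq_of_mem_inter_of_collinear hn₁ hn₂ hq₁ hq₂ hp₁ hp₂ hf₁ hf₂ hn
      hnp₁ hnp₂ hnq hf₁p₁ hf₁q hf₂p₂ hf₂q

theorem concyclic_of_forall_two_zsmul_oangle_eq {S : Set P} {p₁ p₂ : P} {θ : Real.Angle}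
    (hθ : θ ≠ 0) (h : ∀ x ∈ S, x = p₁ ∨ x = p₂ ∨ (2 : ℤ) • ∡ p₁ x p₂ = θ) : Concyclic S := by
  by_cases hx : ∃ x ∈ S, (2 : ℤ) • ∡ p₁ x p₂ = θ
  · obtain ⟨x, -, hx⟩ := hx
    have hind : AffineIndependent ℝ ![p₁, x, p₂] := by
      rw [← oangle_ne_zero_and_ne_pi_iff_affineIndependent, ← Real.Angle.two_zsmul_ne_zero_iff,
        hx]
      exact hθ
    let t : Affine.Triangle ℝ P := ⟨![p₁, x, p₂], hind⟩
    refine ⟨cospherical_iff_exists_sphere.2 ⟨t.circumsphere, fun y hy => ?_⟩,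
      coplanar_of_fact_finrank_eq_two S⟩
    rcases h y hy with rfl | rfl | hy
    · exact t.mem_circumsphere 0
    · exact t.mem_circumsphere 2
    · exact Affine.Triangle.mem_circumsphere_of_two_zsmul_oangle_eq (i₁ := 0) (i₂ := 1) (i₃ := 2)
        (by decide) (by decide) (by decide) (hy.trans hx.symm)
  · refine (concyclic_pair p₁ p₂).subset fun y hy => ?_
    rcases h y hy with rfl | rfl | hy'
    · exact Set.mem_insert _ _
    · exact Set.mem_insert_of_mem _ rfl
    · exact absurd ⟨y, hy, hy'⟩ hx

theorem exists_two_zsmul_oangle_eq_of_miquel_triangle {A B C L M N Q : P} {sA sB sC : Sphere P}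
    (hABC : ¬Collinear ℝ ({A, B, C} : Set P))
    (hL : L ∈ line[ℝ, B, C]) (hLB : L ≠ B) (hLC : L ≠ C)
    (hM : M ∈ line[ℝ, C, A]) (hMC : M ≠ C) (hMA : M ≠ A)
    (hN : N ∈ line[ℝ, A, B]) (hNA : N ≠ A) (hNB : N ≠ B)
    (hAsA : A ∈ sA) (hMsA : M ∈ sA) (hNsA : N ∈ sA)
    (hBsB : B ∈ sB) (hNsB : N ∈ sB) (hLsB : L ∈ sB)
    (hCsC : C ∈ sC) (hLsC : L ∈ sC) (hMsC : M ∈ sC)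
    (hQsA : Q ∈ sA) (hQsB : Q ∈ sB) (hQsC : Q ∈ sC) :
    ∃ θ : Real.Angle, θ ≠ 0 ∧ (∃ F ∈ sA, F ≠ A ∧ F ≠ Q ∧ (2 : ℤ) • ∡ Q F A = θ) ∧
      (∃ G ∈ sB, G ≠ B ∧ G ≠ Q ∧ (2 : ℤ) • ∡ Q G B = θ) ∧
      (∃ H ∈ sC, H ≠ C ∧ H ≠ Q ∧ (2 : ℤ) • ∡ Q H C = θ) := by
  have colN : Collinear ℝ ({A, N, B} : Set P) :=
    (collinear_insert_of_mem_affineSpan_pair hN).subset (by simp [Set.insert_subset_iff])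
  have colM : Collinear ℝ ({A, M, C} : Set P) :=
    (collinear_insert_of_mem_affineSpan_pair hM).subset (by simp [Set.insert_subset_iff])
  have colL : Collinear ℝ ({B, L, C} : Set P) :=
    (collinear_insert_of_mem_affineSpan_pair hL).subset (by simp [Set.insert_subset_iff])
  have hMN : M ≠ N := fun h => hMA <| eq_of_mem_affineSpan_pair_of_mem_affineSpan_pair hABC
    (h ▸ hN) (Set.pair_comm C A ▸ hM)
  have hLN : L ≠ N := fun h => hLB <| eq_of_mem_affineSpan_pair_of_mem_affineSpan_pair
    (by rwa [Set.insert_comm] at hABC) (h ▸ Set.pair_comm A B ▸ hN) hL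
  have hLM : L ≠ M := fun h => hLC <| eq_of_mem_affineSpan_pair_of_mem_affineSpan_pair
    (by rwa [Set.pair_comm, Set.insert_comm] at hABC) (h ▸ hM) (Set.pair_comm B C ▸ hL)
  have hQA : Q ≠ A := fun h => Sphere.not_collinear_of_mem (h ▸ hQsB) hNsB hBsB hNA.symm
    (ne₁₂_of_not_collinear hABC) hNB colN
  obtain ⟨F, hF, hFA, hFQ⟩ : ∃ F ∈ sA, F ≠ A ∧ F ≠ Q := by
    by_cases hMQ : M = Q
    exacts [⟨N, hNsA, hNA, fun h => hMN (hMQ.trans h.symm)⟩, ⟨M, hMsA, hMA, hMQ⟩]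
  obtain ⟨G, hG, hGB, hGQ⟩ : ∃ G ∈ sB, G ≠ B ∧ G ≠ Q := by
    by_cases hNQ : N = Q
    exacts [⟨L, hLsB, hLB, fun h => hLN (h.trans hNQ.symm)⟩, ⟨N, hNsB, hNB, hNQ⟩]
  obtain ⟨H, hH, hHC, hHQ⟩ : ∃ H ∈ sC, H ≠ C ∧ H ≠ Q := by
    by_cases hLQ : L = Q
    exacts [⟨M, hMsC, hMC, fun h => hLM (hLQ.trans h.symm)⟩, ⟨L, hLsC, hLC, hLQ⟩]
  refine ⟨(2 : ℤ) • ∡ Q F A, ?_, ⟨F, hF, hFA, hFQ, rfl⟩, ⟨G, hG, hGB, hGQ, ?_⟩,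
    ⟨H, hH, hHC, hHQ, ?_⟩⟩
  · exact Real.Angle.two_zsmul_ne_zero_iff.2 <| oangle_ne_zero_and_ne_pi_iff_not_collinear.2 <|
      Sphere.not_collinear_of_mem hQsA hF hAsA hFQ.symm hQA hFA
  · exact (two_zsmul_oangle_eq_of_miquel hAsA hBsB hCsC hNsA hNsB hMsA hMsC hLsB hLsC hQsA hQsB
      hQsC colN colM (colL.subset (by simp [Set.insert_subset_iff])) hNA hNB hMA hMC hLB hLC
      hMN hLN hF hFA hFQ hG hGB hGQ).symm
  · exact (two_zsmul_oangle_eq_of_miquel hAsA hCsC hBsB hMsA hMsC hNsA hNsB hLsC hLsB hQsA hQsC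
      hQsB colM colN colL hMA hMC hNA hNB hLC hLB hMN.symm hLM hF hFA hFQ hH hHC hHQ).symm

end EuclideanGeometry

theorem concyclic_UVWPQ_general (A B C P L M N Q U V W : Pt)
    (hABC : AffineIndependent ℝ ![A, B, C])
    (hPa : P ∉ line[ℝ, B, C]) (hPc : P ∉ line[ℝ, A, B])
    -- Cevian feet
    (hL2 : L ∈ line[ℝ, B, C]) (hLB : L ≠ B) (hLC : L ≠ C)
    (hM2 : M ∈ line[ℝ, C, A]) (hMC : M ≠ C) (hMA : M ≠ A)
    (hN2 : N ∈ line[ℝ, A, B]) (hNA : N ≠ A) (hNB : N ≠ B)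
    -- the three Miquel circles
    (sA sB sC : Sphere Pt)
    (hsA1 : A ∈ sA) (hsA2 : M ∈ sA) (hsA3 : N ∈ sA)
    (hsB1 : B ∈ sB) (hsB2 : N ∈ sB) (hsB3 : L ∈ sB)
    (hsC1 : C ∈ sC) (hsC2 : L ∈ sC) (hsC3 : M ∈ sC)
    -- the Miquel point
    (hQ1 : Q ∈ sA) (hQ2 : Q ∈ sB) (hQ3 : Q ∈ sC)
    -- second intersections of the Cevian lines with the circles
    (hU1 : U ∈ line[ℝ, A, P]) (hU2 : U ∈ sA)
    (hU3 : ∀ X : Pt, X ∈ line[ℝ, A, P] → X ∈ sA → X = A ∨ X = U)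
    (hV1 : V ∈ line[ℝ, B, P]) (hV2 : V ∈ sB)
    (hV3 : ∀ X : Pt, X ∈ line[ℝ, B, P] → X ∈ sB → X = B ∨ X = V)
    (hW1 : W ∈ line[ℝ, C, P]) (hW2 : W ∈ sC)
    (hW3 : ∀ X : Pt, X ∈ line[ℝ, C, P] → X ∈ sC → X = C ∨ X = W) :
    Concyclic ({U, V, W, P, Q} : Set Pt) := by
  have : Fact (finrank ℝ Pt = 2) := ⟨finrank_euclideanSpace_fin⟩
  let : Module.Oriented ℝ Pt (Fin 2) := ⟨(EuclideanSpace.basisFun (Fin 2) ℝ).toBasis.orientation⟩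
  obtain ⟨θ, hθ, ⟨F, hF, hFA, hFQ, hFθ⟩, ⟨G, hG, hGB, hGQ, hGθ⟩, ⟨H, hH, hHC, hHQ, hHθ⟩⟩ :=
    exists_two_zsmul_oangle_eq_of_miquel_triangle (affineIndependent_iff_not_collinear_set.1 hABC)
      hL2 hLB hLC hM2 hMC hMA hN2 hNA hNB hsA1 hsA2 hsA3 hsB1 hsB2 hsB3 hsC1 hsC2 hsC3 hQ1 hQ2 hQ3
  have hPA : P ≠ A := fun h => hPc (h ▸ left_mem_affineSpan_pair ℝ A B)
  have hPB : P ≠ B := fun h => hPa (h ▸ left_mem_affineSpan_pair ℝ B C)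
  have hPC : P ≠ C := fun h => hPa (h ▸ right_mem_affineSpan_pair ℝ B C)
  refine concyclic_of_forall_two_zsmul_oangle_eq (p₁ := Q) (p₂ := P) hθ ?_
  simp only [Set.mem_insert_iff, Set.mem_singleton_iff]
  rintro x (rfl | rfl | rfl | rfl | rfl)
  · exact (Sphere.two_zsmul_oangle_of_second_intersection hsA1 hF hQ1 hU2 hU1 hU3 hPA hFA
      hFQ).imp_right (Or.imp_right (·.trans hFθ))
  · exact (Sphere.two_zsmul_oangle_of_second_intersection hsB1 hG hQ2 hV2 hV1 hV3 hPB hGB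
      hGQ).imp_right (Or.imp_right (·.trans hGθ))
  · exact (Sphere.two_zsmul_oangle_of_second_intersection hsC1 hH hQ3 hW2 hW1 hW3 hPC hHC
      hHQ).imp_right (Or.imp_right (·.trans hHθ))
  · exact Or.inr (Or.inl rfl)
  · exact Or.inl rfl

/-- Let `L`, `M`, `N` be the feet of the Cevians through `P` in a non-degenerate triangle
`ABC`, let `Q` be the Miquel point (common point of circles `AMN`, `BNL`, `CLM`), and let
`U`, `V`, `W` be the second intersections of the Cevian lines `AP`, `BP`, `CP` with the
circles `AMN`, `BNL`, `CLM` respectively.  Then `U`, `V`, `W`, `P`, `Q` are concyclic. -/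
theorem concyclic_UVWPQ (A B C P L M N Q U V W : Pt)
    (hABC : AffineIndependent ℝ ![A, B, C])
    (hPa : P ∉ line[ℝ, B, C]) (hPb : P ∉ line[ℝ, C, A]) (hPc : P ∉ line[ℝ, A, B])
    -- Cevian feet
    (hL1 : L ∈ line[ℝ, A, P]) (hL2 : L ∈ line[ℝ, B, C]) (hLB : L ≠ B) (hLC : L ≠ C)
    (hM1 : M ∈ line[ℝ, B, P]) (hM2 : M ∈ line[ℝ, C, A]) (hMC : M ≠ C) (hMA : M ≠ A)
    (hN1 : N ∈ line[ℝ, C, P]) (hN2 : N ∈ line[ℝ, A, B]) (hNA : N ≠ A) (hNB : N ≠ B)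
    -- the three Miquel circles
    (sA sB sC : Sphere Pt)
    (hsA1 : A ∈ sA) (hsA2 : M ∈ sA) (hsA3 : N ∈ sA)
    (hsB1 : B ∈ sB) (hsB2 : N ∈ sB) (hsB3 : L ∈ sB)
    (hsC1 : C ∈ sC) (hsC2 : L ∈ sC) (hsC3 : M ∈ sC)
    -- the Miquel point
    (hQ1 : Q ∈ sA) (hQ2 : Q ∈ sB) (hQ3 : Q ∈ sC)
    -- second intersections of the Cevian lines with the circles
    (hU1 : U ∈ line[ℝ, A, P]) (hU2 : U ∈ sA)
    (hU3 : ∀ X : Pt, X ∈ line[ℝ, A, P] → X ∈ sA → X = A ∨ X = U)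
    (hV1 : V ∈ line[ℝ, B, P]) (hV2 : V ∈ sB)
    (hV3 : ∀ X : Pt, X ∈ line[ℝ, B, P] → X ∈ sB → X = B ∨ X = V)
    (hW1 : W ∈ line[ℝ, C, P]) (hW2 : W ∈ sC)
    (hW3 : ∀ X : Pt, X ∈ line[ℝ, C, P] → X ∈ sC → X = C ∨ X = W) :
    Concyclic ({U, V, W, P, Q} : Set Pt) :=
  concyclic_UVWPQ_general A B C P L M N Q U V W hABC hPa hPc hL2 hLB hLC hM2 hMC hMA hN2 hNA hNB sA
    sB sC hsA1 hsA2 hsA3 hsB1 hsB2 hsB3 hsC1 hsC2 hsC3 hQ1 hQ2 hQ3 hU1 hU2 hU3 hV1 hV2 hV3 hW1 hW2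
    hW3
end

section
/- Let ABC be a non-degenerate triangle in the Euclidean plane and let P be a point not lying on any of the lines BC, CA, AB. Let L = AP ∩ BC, M = BP ∩ CA, N = CP ∩ AB be the feet of the Cevians through P, assumed to exist and not be vertices. Let Q be the Miquel point of L, M, N, and let U be the second intersection of line AP with circle AMN, V the second intersection of line BP with circle BNL, and W the second intersection of line CP with circle CLM. Then P lies on the circle through U, V, W. -/
/-!
Write `P` in barycentric coordinates `w` with respect to `ABC` (so `∑ w_X • (X - P) = 0`) and
`L - P = t_A • (A - P)`, etc.; the Cevian condition reads `t_A (1 - w_A) = -w_A`. Expanding the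
circle equations of `A`, `M`, `N` around `P` and eliminating the inner products with the centre by
means of `∑ w_X • (X - P) = 0` gives the power of `P` with respect to circle `AMN` as
`π_A = w_A |PA|² + w_B t_B |PB|² + w_C t_C |PC|²`, and the Cevian conditions then give
`∑ w_X π_X = 0`. The second intersection is `U = P + (π_A / |PA|²) • (A - P)`, so for the weights
`α_U = w_A |PA|² / π_A` both `∑ α • (U - P)` and `∑ α |PU|²` vanish. Non-collinearity of `U, V, W`
makes `∑ α ≠ 0`, and the weighted sum of the circle equations of `U, V, W` then says that the
power of `P` with respect to the circle `UVW` is zero.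
-/

open EuclideanGeometry

local notation "Pt" => EuclideanSpace ℝ (Fin 2)

section Affine

variable {k V P ι : Type*} [Field k] [AddCommGroup V] [Module k V] [AddTorsor V P] [Fintype ι]

theorem exists_sum_smul_vsub_eq_zero_of_mem_affineSpan {p : ι → P} {x : P}
    (hx : x ∈ affineSpan k (Set.range p)) :
    ∃ w : ι → k, ∑ i, w i = 1 ∧ ∑ i, w i • (p i -ᵥ x) = 0 := by
  obtain ⟨w, hw, hxw⟩ := eq_affineCombination_of_mem_affineSpan_of_fintype hx
  refine ⟨w, hw, ?_⟩
  have h := Finset.univ.affineCombination_eq_weightedVSubOfPoint_vadd_of_sum_eq_one w p hw x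
  rwa [← hxw, Finset.weightedVSubOfPoint_apply, eq_vadd_iff_vsub_eq, vsub_self,
    eq_comm] at h

theorem AffineIndependent.eq_zero_of_sum_smul_vsub_eq_zero {p : ι → P}
    (hp : AffineIndependent k p) {w : ι → k} (b : P) (hw : ∑ i, w i = 0)
    (h : ∑ i, w i • (p i -ᵥ b) = 0) (i : ι) : w i = 0 := by
  refine (affineIndependent_iff_of_fintype (k := k) p).1 hp w hw ?_ i
  rwa [Finset.weightedVSub_eq_weightedVSubOfPoint_of_sum_eq_zero _ _ _ hw b,
    Finset.weightedVSubOfPoint_apply]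

theorem exists_vsub_eq_smul_of_mem_line_inter {a b c p l : P} {wa wb wc : k}
    (habc : AffineIndependent k ![a, b, c]) (hw : wa + wb + wc = 1)
    (hp : wa • (a -ᵥ p) + wb • (b -ᵥ p) + wc • (c -ᵥ p) = 0)
    (hla : l ∈ line[k, a, p]) (hlbc : l ∈ line[k, b, c]) :
    ∃ t : k, l -ᵥ p = t • (a -ᵥ p) ∧ t * (1 - wa) = -wa := by
  obtain ⟨t, rfl⟩ := mem_affineSpan_pair_iff_exists_lineMap_rev_eq.1 hla
  obtain ⟨r, hr⟩ := mem_affineSpan_pair_iff_exists_lineMap_eq.1 hlbc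
  refine ⟨t, by rw [AffineMap.lineMap_vsub_left], ?_⟩
  -- a relation with coefficient sum `0`, so affine independence forces every coefficient to vanish
  have hrel : (t - (t - 1) * wa) • (a -ᵥ p) + (-(1 - r) - (t - 1) * wb) • (b -ᵥ p)
      + (-r - (t - 1) * wc) • (c -ᵥ p) = 0 := by
    have h := congrArg (· -ᵥ p) hr
    simp only [AffineMap.lineMap_apply, vadd_vsub_assoc, vsub_self, add_zero] at h
    rw [← vsub_sub_vsub_cancel_right c b p] at h
    linear_combination (norm := module) -h - (t - 1) • hp
  have hcoef := habc.eq_zero_of_sum_smul_vsub_eq_zero p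
    (w := ![t - (t - 1) * wa, -(1 - r) - (t - 1) * wb, -r - (t - 1) * wc])
    (by
      simp only [Fin.sum_univ_three, Matrix.cons_val_zero, Matrix.cons_val_one, Matrix.cons_val]
      linear_combination -(t - 1) * hw)
    (by simpa [Fin.sum_univ_three] using hrel) 0
  simp only [Matrix.cons_val_zero] at hcoef
  linear_combination hcoef

end Affine

namespace EuclideanGeometry

variable {V P : Type*} [NormedAddCommGroup V] [InnerProductSpace ℝ V] [MetricSpace P]
  [NormedAddTorsor V P]

theorem Sphere.power_eq_of_mem {s : Sphere P} {x : P} (hx : x ∈ s) (p : P) :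
    s.power p = -(‖x -ᵥ p‖ ^ 2 + 2 * inner ℝ (x -ᵥ p) (p -ᵥ s.center)) := by
  rw [Sphere.power, ← mem_sphere.1 hx, dist_eq_norm_vsub V, dist_eq_norm_vsub V,
    ← vsub_add_vsub_cancel x p s.center, norm_add_sq_real]
  ring

theorem Sphere.secondInter_vsub_eq {s : Sphere P} {a : P} (ha : a ∈ s) (p : P) :
    s.secondInter a (p -ᵥ a) -ᵥ p = (s.power p / ‖a -ᵥ p‖ ^ 2) • (a -ᵥ p) := by
  rcases eq_or_ne a p with rfl | hap
  · simp
  have hpa : ‖p -ᵥ a‖ ≠ 0 := by simpa using hap.symm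
  rw [s.power_eq_of_mem ha, Sphere.secondInter, vadd_vsub_assoc, ← neg_vsub_eq_vsub_rev p a,
    norm_neg, ← vsub_add_vsub_cancel p a s.center, inner_add_right, inner_neg_left,
    inner_neg_left, real_inner_self_eq_norm_sq]
  match_scalars
  field_simp
  ring

theorem Sphere.eq_secondInter_of_forall {s : Sphere P} {a q u : P} (ha : a ∈ s)
    (hu : u ∈ line[ℝ, a, q]) (hus : u ∈ s)
    (h : ∀ x ∈ line[ℝ, a, q], x ∈ s → x = a ∨ x = u) :
    u = s.secondInter a (q -ᵥ a) := by
  rcases h _ (s.secondInter_vsub_mem_affineSpan a q) ((s.secondInter_mem _).2 ha) with h' | h'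
  · rcases (s.eq_or_eq_secondInter_iff_mem_of_mem_affineSpan_pair ha hu).2 hus with h'' | h''
    · rw [h'', h']
    · exact h''
  · exact h'.symm

theorem Sphere.vsub_eq_power_div_smul_of_forall {s : Sphere P} {a p u : P} (ha : a ∈ s)
    (hu : u ∈ line[ℝ, a, p]) (hus : u ∈ s)
    (h : ∀ x ∈ line[ℝ, a, p], x ∈ s → x = a ∨ x = u) :
    u -ᵥ p = (s.power p / ‖a -ᵥ p‖ ^ 2) • (a -ᵥ p) := by
  rw [s.eq_secondInter_of_forall ha hu hus h]
  exact s.secondInter_vsub_eq ha p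

theorem Sphere.mem_of_sum_smul_vsub_eq_zero {ι : Type*} [Fintype ι] {s : Sphere P} {p : P}
    {u : ι → P} {α : ι → ℝ} (hu : ∀ i, u i ∈ s) (h₁ : ∑ i, α i • (u i -ᵥ p) = 0)
    (h₂ : ∑ i, α i * ‖u i -ᵥ p‖ ^ 2 = 0) (hα : ∑ i, α i ≠ 0) : p ∈ s := by
  obtain ⟨i, -⟩ := Finset.exists_ne_zero_of_sum_ne_zero hα
  have hpow : (∑ i, α i) * s.power p = 0 := calc
    (∑ i, α i) * s.power p
        = ∑ i, -(α i * ‖u i -ᵥ p‖ ^ 2 + 2 * inner ℝ (α i • (u i -ᵥ p)) (p -ᵥ s.center)) := by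
          rw [Finset.sum_mul]
          refine Finset.sum_congr rfl fun i _ => ?_
          rw [s.power_eq_of_mem (hu i), real_inner_smul_left]
          ring
      _ = -(∑ i, α i * ‖u i -ᵥ p‖ ^ 2 + 2 * inner ℝ (∑ i, α i • (u i -ᵥ p)) (p -ᵥ s.center)) := by
          rw [Finset.sum_neg_distrib, Finset.sum_add_distrib, ← Finset.mul_sum, sum_inner]
      _ = 0 := by rw [h₁, h₂, inner_zero_left]; ring
  refine (Sphere.power_eq_zero_iff_mem_sphere ?_).1 ((mul_eq_zero.1 hpow).resolve_left hα)
  rw [← mem_sphere.1 (hu i)]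
  exact dist_nonneg

theorem Sphere.power_eq_of_mem_cevian {s : Sphere P} {p a b c m n : P} {wa wb wc tb tc : ℝ}
    (hw : wa + wb + wc = 1) (hp : wa • (a -ᵥ p) + wb • (b -ᵥ p) + wc • (c -ᵥ p) = 0)
    (hm : m -ᵥ p = tb • (b -ᵥ p)) (htb : tb * (1 - wb) = -wb)
    (hn : n -ᵥ p = tc • (c -ᵥ p)) (htc : tc * (1 - wc) = -wc)
    (has : a ∈ s) (hms : m ∈ s) (hns : n ∈ s) :
    s.power p = wa * ‖a -ᵥ p‖ ^ 2 + wb * tb * ‖b -ᵥ p‖ ^ 2 + wc * tc * ‖c -ᵥ p‖ ^ 2 := by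
  have ha := s.power_eq_of_mem has p
  have hm' := s.power_eq_of_mem hms p
  have hn' := s.power_eq_of_mem hns p
  rw [hm, norm_smul, real_inner_smul_left, mul_pow, Real.norm_eq_abs, sq_abs] at hm'
  rw [hn, norm_smul, real_inner_smul_left, mul_pow, Real.norm_eq_abs, sq_abs] at hn'
  have hinner := congrArg (inner ℝ · (p -ᵥ s.center)) hp
  simp only [inner_add_left, real_inner_smul_left, inner_zero_left] at hinner
  linear_combination -wa * ha + (1 - wb) * hm' + (1 - wc) * hn' + 2 * hinner
    - (tb * ‖b -ᵥ p‖ ^ 2 + 2 * inner ℝ (b -ᵥ p) (p -ᵥ s.center)) * htb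
    - (tc * ‖c -ᵥ p‖ ^ 2 + 2 * inner ℝ (c -ᵥ p) (p -ᵥ s.center)) * htc
    + s.power p * hw

theorem norm_vsub_ne_zero_and_ne_zero_of_vsub_eq_div_smul {p x y : P} {π : ℝ}
    (h : y -ᵥ p = (π / ‖x -ᵥ p‖ ^ 2) • (x -ᵥ p)) (hy : y ≠ p) : ‖x -ᵥ p‖ ≠ 0 ∧ π ≠ 0 := by
  rw [← vsub_ne_zero, h] at hy
  exact ⟨fun hx => hy (by simp [norm_eq_zero.1 hx]), fun hπ => hy (by simp [hπ])⟩

theorem Sphere.mem_of_vsub_eq_div_norm_sq_smul {s : Sphere P} {p a b c u v w : P}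
    {wa wb wc πa πb πc : ℝ}
    (hw : wa + wb + wc = 1) (hp : wa • (a -ᵥ p) + wb • (b -ᵥ p) + wc • (c -ᵥ p) = 0)
    (hπ : wa * πa + wb * πb + wc * πc = 0)
    (hu : u -ᵥ p = (πa / ‖a -ᵥ p‖ ^ 2) • (a -ᵥ p)) (hv : v -ᵥ p = (πb / ‖b -ᵥ p‖ ^ 2) • (b -ᵥ p))
    (hw' : w -ᵥ p = (πc / ‖c -ᵥ p‖ ^ 2) • (c -ᵥ p))
    (huvw : ¬ Collinear ℝ {u, v, w}) (hus : u ∈ s) (hvs : v ∈ s) (hws : w ∈ s) : p ∈ s := by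
  rcases eq_or_ne u p with rfl | hup; · exact hus
  rcases eq_or_ne v p with rfl | hvp; · exact hvs
  rcases eq_or_ne w p with rfl | hwp; · exact hws
  obtain ⟨ha, hπa⟩ := norm_vsub_ne_zero_and_ne_zero_of_vsub_eq_div_smul hu hup
  obtain ⟨hb, hπb⟩ := norm_vsub_ne_zero_and_ne_zero_of_vsub_eq_div_smul hv hvp
  obtain ⟨hc, hπc⟩ := norm_vsub_ne_zero_and_ne_zero_of_vsub_eq_div_smul hw' hwp
  set α : Fin 3 → ℝ := ![wa * ‖a -ᵥ p‖ ^ 2 / πa, wb * ‖b -ᵥ p‖ ^ 2 / πb, wc * ‖c -ᵥ p‖ ^ 2 / πc]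
  have h₁ : ∑ i, α i • (![u, v, w] i -ᵥ p) = 0 := by
    simp only [Fin.sum_univ_three, α, Matrix.cons_val, hu, hv, hw', smul_smul]
    convert hp using 3 <;> field_simp
  have h₂ : ∑ i, α i * ‖![u, v, w] i -ᵥ p‖ ^ 2 = 0 := by
    simp only [Fin.sum_univ_three, α, Matrix.cons_val, hu, hv, hw', norm_smul, mul_pow,
      Real.norm_eq_abs, sq_abs]
    field_simp
    linear_combination hπ
  have hα : ∑ i, α i ≠ 0 := by
    intro h0
    have h := (affineIndependent_iff_not_collinear_set.2 huvw).eq_zero_of_sum_smul_vsub_eq_zero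
      p h0 h₁
    have ha0 : wa = 0 := by simpa [α, ha, hπa] using h 0
    have hb0 : wb = 0 := by simpa [α, hb, hπb] using h 1
    have hc0 : wc = 0 := by simpa [α, hc, hπc] using h 2
    simp [ha0, hb0, hc0] at hw
  exact s.mem_of_sum_smul_vsub_eq_zero (u := ![u, v, w])
    (by simp [Fin.forall_fin_succ, hus, hvs, hws]) h₁ h₂ hα

end EuclideanGeometry

theorem P_mem_circle_UVW_general (A B C P L M N U V W : Pt)
    (hABC : AffineIndependent ℝ ![A, B, C])
    -- Cevian feet
    (hL1 : L ∈ line[ℝ, A, P]) (hL2 : L ∈ line[ℝ, B, C])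
    (hM1 : M ∈ line[ℝ, B, P]) (hM2 : M ∈ line[ℝ, C, A])
    (hN1 : N ∈ line[ℝ, C, P]) (hN2 : N ∈ line[ℝ, A, B])
    -- the three Miquel circles
    (sA sB sC : Sphere Pt)
    (hsA1 : A ∈ sA) (hsA2 : M ∈ sA) (hsA3 : N ∈ sA)
    (hsB1 : B ∈ sB) (hsB2 : N ∈ sB) (hsB3 : L ∈ sB)
    (hsC1 : C ∈ sC) (hsC2 : L ∈ sC) (hsC3 : M ∈ sC)
    -- second intersections of the Cevian lines with the circles
    (hU1 : U ∈ line[ℝ, A, P]) (hU2 : U ∈ sA)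
    (hU3 : ∀ X : Pt, X ∈ line[ℝ, A, P] → X ∈ sA → X = A ∨ X = U)
    (hV1 : V ∈ line[ℝ, B, P]) (hV2 : V ∈ sB)
    (hV3 : ∀ X : Pt, X ∈ line[ℝ, B, P] → X ∈ sB → X = B ∨ X = V)
    (hW1 : W ∈ line[ℝ, C, P]) (hW2 : W ∈ sC)
    (hW3 : ∀ X : Pt, X ∈ line[ℝ, C, P] → X ∈ sC → X = C ∨ X = W)
    -- the circle UVW
    (hUVW : ¬ Collinear ℝ ({U, V, W} : Set Pt))
    (s : Sphere Pt) (hsU : U ∈ s) (hsV : V ∈ s) (hsW : W ∈ s) :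
    P ∈ s := by
  have hspan : P ∈ affineSpan ℝ (Set.range ![A, B, C]) := by
    rw [hABC.affineSpan_eq_top_iff_card_eq_finrank_add_one.2 (by simp)]
    trivial
  obtain ⟨w, hw, hP⟩ := exists_sum_smul_vsub_eq_zero_of_mem_affineSpan hspan
  simp only [Fin.sum_univ_three, Matrix.cons_val] at hw hP
  have hwB : w 1 + w 2 + w 0 = 1 := by linear_combination hw
  have hwC : w 2 + w 0 + w 1 = 1 := by linear_combination hw
  have hPB : w 1 • (B -ᵥ P) + w 2 • (C -ᵥ P) + w 0 • (A -ᵥ P) = 0 := by rw [← hP]; abel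
  have hPC : w 2 • (C -ᵥ P) + w 0 • (A -ᵥ P) + w 1 • (B -ᵥ P) = 0 := by rw [← hP]; abel
  obtain ⟨tl, hL, htl⟩ := exists_vsub_eq_smul_of_mem_line_inter hABC hw hP hL1 hL2
  obtain ⟨tm, hM, htm⟩ :=
    exists_vsub_eq_smul_of_mem_line_inter hABC.comm_left.comm_right hwB hPB hM1 hM2
  obtain ⟨tn, hN, htn⟩ :=
    exists_vsub_eq_smul_of_mem_line_inter hABC.comm_right.comm_left hwC hPC hN1 hN2
  have hpA := sA.power_eq_of_mem_cevian hw hP hM htm hN htn hsA1 hsA2 hsA3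
  have hpB := sB.power_eq_of_mem_cevian hwB hPB hN htn hL htl hsB1 hsB2 hsB3
  have hpC := sC.power_eq_of_mem_cevian hwC hPC hL htl hM htm hsC1 hsC2 hsC3
  refine s.mem_of_vsub_eq_div_norm_sq_smul hw hP ?_
    (sA.vsub_eq_power_div_smul_of_forall hsA1 hU1 hU2 hU3)
    (sB.vsub_eq_power_div_smul_of_forall hsB1 hV1 hV2 hV3)
    (sC.vsub_eq_power_div_smul_of_forall hsC1 hW1 hW2 hW3) hUVW hsU hsV hsW
  rw [hpA, hpB, hpC]
  linear_combination (w 0 * ‖A -ᵥ P‖ ^ 2) * htl + (w 1 * ‖B -ᵥ P‖ ^ 2) * htm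
    + (w 2 * ‖C -ᵥ P‖ ^ 2) * htn
    + (w 0 * tl * ‖A -ᵥ P‖ ^ 2 + w 1 * tm * ‖B -ᵥ P‖ ^ 2 + w 2 * tn * ‖C -ᵥ P‖ ^ 2) * hw

/-- Let `L`, `M`, `N` be the feet of the Cevians through `P` in a non-degenerate
triangle `ABC`, let `Q` be the Miquel point (common point of circles `AMN`, `BNL`,
`CLM`), and let `U`, `V`, `W` be the second intersections of the Cevian lines `AP`,
`BP`, `CP` with the circles `AMN`, `BNL`, `CLM` respectively.  Then `P` lies on
the circle `UVW`. -/
theorem P_mem_circle_UVW (A B C P L M N Q U V W : Pt)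
    (hABC : AffineIndependent ℝ ![A, B, C])
    (hPa : P ∉ line[ℝ, B, C]) (hPb : P ∉ line[ℝ, C, A]) (hPc : P ∉ line[ℝ, A, B])
    -- Cevian feet
    (hL1 : L ∈ line[ℝ, A, P]) (hL2 : L ∈ line[ℝ, B, C]) (hLB : L ≠ B) (hLC : L ≠ C)
    (hM1 : M ∈ line[ℝ, B, P]) (hM2 : M ∈ line[ℝ, C, A]) (hMC : M ≠ C) (hMA : M ≠ A)
    (hN1 : N ∈ line[ℝ, C, P]) (hN2 : N ∈ line[ℝ, A, B]) (hNA : N ≠ A) (hNB : N ≠ B)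
    -- the three Miquel circles
    (sA sB sC : Sphere Pt)
    (hsA1 : A ∈ sA) (hsA2 : M ∈ sA) (hsA3 : N ∈ sA)
    (hsB1 : B ∈ sB) (hsB2 : N ∈ sB) (hsB3 : L ∈ sB)
    (hsC1 : C ∈ sC) (hsC2 : L ∈ sC) (hsC3 : M ∈ sC)
    -- the Miquel point
    (hQ1 : Q ∈ sA) (hQ2 : Q ∈ sB) (hQ3 : Q ∈ sC)
    -- second intersections of the Cevian lines with the circles
    (hU1 : U ∈ line[ℝ, A, P]) (hU2 : U ∈ sA)
    (hU3 : ∀ X : Pt, X ∈ line[ℝ, A, P] → X ∈ sA → X = A ∨ X = U)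
    (hV1 : V ∈ line[ℝ, B, P]) (hV2 : V ∈ sB)
    (hV3 : ∀ X : Pt, X ∈ line[ℝ, B, P] → X ∈ sB → X = B ∨ X = V)
    (hW1 : W ∈ line[ℝ, C, P]) (hW2 : W ∈ sC)
    (hW3 : ∀ X : Pt, X ∈ line[ℝ, C, P] → X ∈ sC → X = C ∨ X = W)
    -- the circle UVW
    (hUVW : ¬ Collinear ℝ ({U, V, W} : Set Pt))
    (s : Sphere Pt) (hsU : U ∈ s) (hsV : V ∈ s) (hsW : W ∈ s) :
    P ∈ s :=
  P_mem_circle_UVW_general A B C P L M N U V W hABC hL1 hL2 hM1 hM2 hN1 hN2 sA sB sC hsA1 hsA2 hsA3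
    hsB1 hsB2 hsB3 hsC1 hsC2 hsC3 hU1 hU2 hU3 hV1 hV2 hV3 hW1 hW2 hW3 hUVW s hsU hsV hsW
end
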